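/- arXiv:1706.09374 — 3 statements merged into one kernel-verified Lean document; each statement's English description precedes it below -/
import Mathlib

section
/- Let K ≥ 1 and 1/2 < p₂ ≤ p₁ be real numbers, and let V̄ : (0,∞) → ℝ be a measurable function such that y^(2p₂) ≤ exp(2·V̄(y)) ≤ y^(2p₁) for all y ≥ K. Then for every real m with 0 ≤ m < 2p₂ − 1 and every r ≥ K, the m-th moment of the normalized density satisfies (∫_r^∞ exp(−2·V̄(y)) dy)^(−1) · ∫_r^∞ ξ^m · exp(−2·V̄(ξ)) dξ ≤ ((2p₁ − 1)/(2p₂ − 1 − m)) · r^(m + 2(p₁ − p₂)). -/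
open MeasureTheory

/-- Under the two-sided bound `y^(2p₂) ≤ exp(2·V̄(y)) ≤ y^(2p₁)`
for `y ≥ K` (with `K ≥ 1`, `1/2 < p₂ ≤ p₁`), for every `0 ≤ m < 2p₂ − 1` and
every `r ≥ K` the `m`-th moment of the normalized density satisfies
`(∫_r^∞ e^{−2V̄})⁻¹ · ∫_r^∞ ξ^m e^{−2V̄(ξ)} dξ
  ≤ ((2p₁ − 1)/(2p₂ − 1 − m)) · r^(m + 2(p₁ − p₂))`. -/
theorem moment_bound_invariant_density
    (K p₁ p₂ : ℝ) (hK : 1 ≤ K) (hp₂ : 1 / 2 < p₂) (hp : p₂ ≤ p₁)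
    (Vbar : ℝ → ℝ) (hmeas : Measurable Vbar)
    (hlb : ∀ y : ℝ, K ≤ y → y ^ (2 * p₂) ≤ Real.exp (2 * Vbar y))
    (hub : ∀ y : ℝ, K ≤ y → Real.exp (2 * Vbar y) ≤ y ^ (2 * p₁))
    (m : ℝ) (hm0 : 0 ≤ m) (hm : m < 2 * p₂ - 1)
    (r : ℝ) (hr : K ≤ r) :
    (∫ y in Set.Ioi r, Real.exp (-(2 * Vbar y)))⁻¹ *
        ∫ ξ in Set.Ioi r, ξ ^ m * Real.exp (-(2 * Vbar ξ)) ≤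
      ((2 * p₁ - 1) / (2 * p₂ - 1 - m)) * r ^ (m + 2 * (p₁ - p₂)) := by
  have hr1 : (1:ℝ) ≤ r := hK.trans hr
  have hrpos : (0:ℝ) < r := lt_of_lt_of_le one_pos hr1
  have hp₁ : 1 / 2 < p₁ := lt_of_lt_of_le hp₂ hp
  -- pointwise bounds on Ioi r
  have hpt_ub : ∀ y ∈ Set.Ioi r, Real.exp (-(2 * Vbar y)) ≤ y ^ (-(2 * p₂)) := by
    intro y hy
    have hy' : K ≤ y := hr.trans (le_of_lt hy)
    have hypos : (0:ℝ) < y := lt_trans hrpos hy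
    have h1 := hlb y hy'
    rw [Real.exp_neg, Real.rpow_neg hypos.le]
    exact inv_anti₀ (Real.rpow_pos_of_pos hypos _) h1
  have hpt_lb : ∀ y ∈ Set.Ioi r, y ^ (-(2 * p₁)) ≤ Real.exp (-(2 * Vbar y)) := by
    intro y hy
    have hy' : K ≤ y := hr.trans (le_of_lt hy)
    have hypos : (0:ℝ) < y := lt_trans hrpos hy
    have h1 := hub y hy'
    rw [Real.exp_neg, Real.rpow_neg hypos.le]
    exact inv_anti₀ (Real.exp_pos _) h1
  have hmeas1 : Measurable fun y => Real.exp (-(2 * Vbar y)) :=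
    (measurable_const.mul hmeas).neg.exp
  -- exponents
  have he₂ : -(2 * p₂) < -1 := by linarith
  have he₁ : -(2 * p₁) < -1 := by linarith
  have heN : m - 2 * p₂ < -1 := by linarith
  -- integrabilities
  have hint_p₂ : IntegrableOn (fun y : ℝ => y ^ (-(2 * p₂))) (Set.Ioi r) :=
    integrableOn_Ioi_rpow_of_lt he₂ hrpos
  have hint_p₁ : IntegrableOn (fun y : ℝ => y ^ (-(2 * p₁))) (Set.Ioi r) :=
    integrableOn_Ioi_rpow_of_lt he₁ hrpos
  have hint_N' : IntegrableOn (fun y : ℝ => y ^ (m - 2 * p₂)) (Set.Ioi r) :=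
    integrableOn_Ioi_rpow_of_lt heN hrpos
  have hint_D : IntegrableOn (fun y => Real.exp (-(2 * Vbar y))) (Set.Ioi r) := by
    refine Integrable.mono' hint_p₂ (hmeas1.aestronglyMeasurable.restrict) ?_
    filter_upwards [ae_restrict_mem measurableSet_Ioi] with y hy
    rw [Real.norm_eq_abs, abs_of_pos (Real.exp_pos _)]
    exact hpt_ub y hy
  have hint_N : IntegrableOn (fun y => y ^ m * Real.exp (-(2 * Vbar y))) (Set.Ioi r) := by
    refine Integrable.mono' hint_N' ((Measurable.mul (by fun_prop) hmeas1).aestronglyMeasurable.restrict) ?_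
    filter_upwards [ae_restrict_mem measurableSet_Ioi] with y hy
    have hypos : (0:ℝ) < y := lt_trans hrpos hy
    rw [Real.norm_eq_abs, abs_of_nonneg (mul_nonneg (Real.rpow_nonneg hypos.le _) (Real.exp_pos _).le)]
    calc y ^ m * Real.exp (-(2 * Vbar y)) ≤ y ^ m * y ^ (-(2 * p₂)) :=
          mul_le_mul_of_nonneg_left (hpt_ub y hy) (Real.rpow_nonneg hypos.le _)
      _ = y ^ (m - 2 * p₂) := by rw [← Real.rpow_add hypos]; ring_nf
  -- bounds on the integrals
  have hD_lb : r ^ (-(2 * p₁) + 1) / (2 * p₁ - 1) ≤ ∫ y in Set.Ioi r, Real.exp (-(2 * Vbar y)) := by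
    have := setIntegral_mono_on hint_p₁ hint_D measurableSet_Ioi hpt_lb
    rw [integral_Ioi_rpow_of_lt he₁ hrpos] at this
    have heq : -r ^ (-(2 * p₁) + 1) / (-(2 * p₁) + 1) = r ^ (-(2 * p₁) + 1) / (2 * p₁ - 1) := by
      rw [neg_div, ← div_neg]; congr 1; ring
    linarith [heq ▸ this]
  have hN_ub : (∫ ξ in Set.Ioi r, ξ ^ m * Real.exp (-(2 * Vbar ξ))) ≤
      r ^ (m - 2 * p₂ + 1) / (2 * p₂ - 1 - m) := by
    have hmono : ∀ y ∈ Set.Ioi r, y ^ m * Real.exp (-(2 * Vbar y)) ≤ y ^ (m - 2 * p₂) := by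
      intro y hy
      have hypos : (0:ℝ) < y := lt_trans hrpos hy
      calc y ^ m * Real.exp (-(2 * Vbar y)) ≤ y ^ m * y ^ (-(2 * p₂)) :=
            mul_le_mul_of_nonneg_left (hpt_ub y hy) (Real.rpow_nonneg hypos.le _)
        _ = y ^ (m - 2 * p₂) := by rw [← Real.rpow_add hypos]; ring_nf
    have := setIntegral_mono_on hint_N hint_N' measurableSet_Ioi hmono
    rw [integral_Ioi_rpow_of_lt heN hrpos] at this
    have heq : -r ^ (m - 2 * p₂ + 1) / (m - 2 * p₂ + 1) = r ^ (m - 2 * p₂ + 1) / (2 * p₂ - 1 - m) := by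
      rw [neg_div, ← div_neg]; congr 1; ring
    linarith [heq ▸ this]
  have hDb_pos : (0:ℝ) < r ^ (-(2 * p₁) + 1) / (2 * p₁ - 1) :=
    div_pos (Real.rpow_pos_of_pos hrpos _) (by linarith)
  have hD_pos : (0:ℝ) < ∫ y in Set.Ioi r, Real.exp (-(2 * Vbar y)) :=
    lt_of_lt_of_le hDb_pos hD_lb
  have hN_nonneg : (0:ℝ) ≤ ∫ ξ in Set.Ioi r, ξ ^ m * Real.exp (-(2 * Vbar ξ)) := by
    refine setIntegral_nonneg measurableSet_Ioi fun y hy => ?_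
    have hypos : (0:ℝ) < y := lt_trans hrpos hy
    exact mul_nonneg (Real.rpow_nonneg hypos.le _) (Real.exp_pos _).le
  calc (∫ y in Set.Ioi r, Real.exp (-(2 * Vbar y)))⁻¹ *
        ∫ ξ in Set.Ioi r, ξ ^ m * Real.exp (-(2 * Vbar ξ))
      ≤ (r ^ (-(2 * p₁) + 1) / (2 * p₁ - 1))⁻¹ * (r ^ (m - 2 * p₂ + 1) / (2 * p₂ - 1 - m)) := by
        apply mul_le_mul (inv_anti₀ hDb_pos hD_lb) hN_ub hN_nonneg
        positivity
    _ = ((2 * p₁ - 1) / (2 * p₂ - 1 - m)) * r ^ (m + 2 * (p₁ - p₂)) := by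
        rw [show m + 2 * (p₁ - p₂) = (m - 2 * p₂ + 1) - (-(2 * p₁) + 1) by ring,
          Real.rpow_sub hrpos]
        field_simp
end

section
/- Let K ≥ 1 and 1/2 < p₂ ≤ p₁ be real numbers, and let V̄ : (0,∞) → ℝ be a measurable locally bounded function such that y^(2p₂) ≤ exp(2·V̄(y)) ≤ y^(2p₁) for all y ≥ K. Then for every ξ ≥ K, v¹(ξ) := 2·∫_K^ξ exp(2·V̄(y₁)) · ( ∫_{y₁}^∞ exp(−2·V̄(y₂)) dy₂ ) dy₁ is finite and satisfies v¹(ξ) ≤ C·ξ^(2(p₁−p₂)+2), where C = 1/((2p₂−1)·(p₁−p₂+1)). -/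
open MeasureTheory

/-!
Since `exp (-2 V̄ y) ≤ y ^ (-2 p₂)` with `2 p₂ > 1`, the tail integral `∫_{y₁}^∞ exp (-2 V̄)`
converges and is at most `y₁ ^ (1 - 2 p₂) / (2 p₂ - 1)`. Multiplied by `exp (2 V̄ y₁) ≤ y₁ ^ (2 p₁)`
this bounds the outer integrand by `y₁ ^ (2 (p₁ - p₂) + 1) / (2 p₂ - 1)`, whose integral over
`[K, ξ]` is at most `ξ ^ (2 (p₁ - p₂) + 2) / ((2 p₂ - 1) (2 (p₁ - p₂) + 2))`. The outer integrand
is measurable because the tail integral is antitone.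
-/

open Set Real

section RpowTail

variable {f : ℝ → ℝ} {s x : ℝ}

theorem integrableOn_Ioi_of_abs_le_rpow (hs : 1 < s) (hx : 0 < x)
    (hfm : AEStronglyMeasurable f (volume.restrict (Ioi x)))
    (hf : ∀ y, x < y → |f y| ≤ y ^ (-s)) : IntegrableOn f (Ioi x) :=
  (integrableOn_Ioi_rpow_of_lt (by linarith) hx).mono' hfm <|
    (ae_restrict_mem measurableSet_Ioi).mono fun y hy => hf y hy

theorem setIntegral_Ioi_le_of_le_rpow (hs : 1 < s) (hx : 0 < x) (hfi : IntegrableOn f (Ioi x))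
    (hf : ∀ y, x < y → f y ≤ y ^ (-s)) :
    ∫ y in Ioi x, f y ≤ x ^ (1 - s) / (s - 1) :=
  calc ∫ y in Ioi x, f y ≤ ∫ y in Ioi x, y ^ (-s) :=
        setIntegral_mono_on hfi (integrableOn_Ioi_rpow_of_lt (by linarith) hx)
          measurableSet_Ioi fun y hy => hf y hy
    _ = x ^ (1 - s) / (s - 1) := by
        rw [integral_Ioi_rpow_of_lt (by linarith) hx, ← neg_div_neg_eq, neg_neg, neg_add',
          neg_neg, add_comm, ← sub_eq_add_neg]

end RpowTail

theorem antitoneOn_setIntegral_Ioi {f : ℝ → ℝ} {K : ℝ} (hf : 0 ≤ f)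
    (hfi : IntegrableOn f (Ioi K)) : AntitoneOn (fun x => ∫ y in Ioi x, f y) (Ici K) :=
  fun _ hx _ _ hxy => setIntegral_mono_set (hfi.mono_set (Ioi_subset_Ioi hx))
    (.of_forall fun y => hf y) (.of_forall (Ioi_subset_Ioi hxy))

section ExpTail

variable {V : ℝ → ℝ} {K s : ℝ}

theorem exp_neg_two_mul_le_rpow {y : ℝ} (hy : 0 < y) (h : y ^ s ≤ exp (2 * V y)) :
    exp (-(2 * V y)) ≤ y ^ (-s) := by
  rw [exp_neg, rpow_neg hy.le]
  exact inv_anti₀ (rpow_pos_of_pos hy _) h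

theorem tail_exp_neg_two_mul (hK : 0 < K) (hs : 1 < s) (hV : Measurable V)
    (hlb : ∀ y, K ≤ y → y ^ s ≤ exp (2 * V y)) (x : ℝ) (hx : K ≤ x) :
    IntegrableOn (fun y => exp (-(2 * V y))) (Ioi x) ∧
      ∫ y in Ioi x, exp (-(2 * V y)) ≤ x ^ (1 - s) / (s - 1) := by
  have hdecay (y : ℝ) (hy : x < y) : exp (-(2 * V y)) ≤ y ^ (-s) :=
    exp_neg_two_mul_le_rpow (hK.trans_le (hx.trans hy.le)) (hlb y (hx.trans hy.le))
  have hint : IntegrableOn (fun y => exp (-(2 * V y))) (Ioi x) :=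
    integrableOn_Ioi_of_abs_le_rpow hs (hK.trans_le hx)
      (hV.const_mul 2).neg.exp.aestronglyMeasurable fun y hy => by
        rw [abs_of_pos (exp_pos _)]
        exact hdecay y hy
  exact ⟨hint, setIntegral_Ioi_le_of_le_rpow hs (hK.trans_le hx) hint hdecay⟩

end ExpTail

section RpowInterval

variable {g : ℝ → ℝ} {K ξ a c : ℝ}

theorem intervalIntegrable_of_abs_le_const_mul_rpow (hKξ : K ≤ ξ) (ha : -1 < a)
    (hgm : AEStronglyMeasurable g (volume.restrict (Ioc K ξ)))
    (hg : ∀ y ∈ Ioc K ξ, |g y| ≤ c * y ^ a) : IntervalIntegrable g volume K ξ :=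
  ((intervalIntegral.intervalIntegrable_rpow' ha).const_mul c).mono_fun'
    (by rwa [uIoc_of_le hKξ]) <| by
      rw [uIoc_of_le hKξ]
      exact (ae_restrict_mem measurableSet_Ioc).mono fun y hy => hg y hy

theorem intervalIntegral_le_of_le_const_mul_rpow (hK : 0 < K) (hKξ : K ≤ ξ) (ha : -1 < a)
    (hc : 0 ≤ c) (hgi : IntervalIntegrable g volume K ξ)
    (hg : ∀ y ∈ Icc K ξ, g y ≤ c * y ^ a) :
    ∫ y in K..ξ, g y ≤ c * (ξ ^ (a + 1) / (a + 1)) :=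
  calc ∫ y in K..ξ, g y ≤ ∫ y in K..ξ, c * y ^ a :=
        intervalIntegral.integral_mono_on hKξ hgi
          ((intervalIntegral.intervalIntegrable_rpow' ha).const_mul c) hg
    _ = c * ((ξ ^ (a + 1) - K ^ (a + 1)) / (a + 1)) := by
        rw [intervalIntegral.integral_const_mul, integral_rpow (Or.inl ha)]
    _ ≤ c * (ξ ^ (a + 1) / (a + 1)) := by
        have : 0 ≤ K ^ (a + 1) := rpow_nonneg hK.le _
        gcongr
        · linarith
        · linarith

end RpowInterval

theorem first_moment_bound_general
    (K p₁ p₂ : ℝ) (hK : 1 ≤ K) (hp₂ : 1 / 2 < p₂) (hp : p₂ ≤ p₁)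
    (Vbar : ℝ → ℝ) (hmeas : Measurable Vbar)
    (hlb : ∀ y : ℝ, K ≤ y → y ^ (2 * p₂) ≤ Real.exp (2 * Vbar y))
    (hub : ∀ y : ℝ, K ≤ y → Real.exp (2 * Vbar y) ≤ y ^ (2 * p₁))
    (ξ : ℝ) (hξ : K ≤ ξ) :
    (∀ y₁ : ℝ, K ≤ y₁ →
        IntegrableOn (fun y₂ => Real.exp (-(2 * Vbar y₂))) (Set.Ioi y₁)) ∧
      IntervalIntegrable
        (fun y₁ => Real.exp (2 * Vbar y₁) *
          ∫ y₂ in Set.Ioi y₁, Real.exp (-(2 * Vbar y₂))) volume K ξ ∧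
      2 * ∫ y₁ in K..ξ, Real.exp (2 * Vbar y₁) *
          ∫ y₂ in Set.Ioi y₁, Real.exp (-(2 * Vbar y₂)) ≤
        (1 / ((2 * p₂ - 1) * (p₁ - p₂ + 1))) * ξ ^ (2 * (p₁ - p₂) + 2) := by
  have hK0 : 0 < K := one_pos.trans_le hK
  have hs : 1 < 2 * p₂ := by linarith
  have htail (y : ℝ) (hy : K ≤ y) := (tail_exp_neg_two_mul hK0 hs hmeas hlb y hy).1
  have hFle (y : ℝ) (hy : K ≤ y) := (tail_exp_neg_two_mul hK0 hs hmeas hlb y hy).2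
  set F : ℝ → ℝ := fun y₁ => ∫ y₂ in Ioi y₁, exp (-(2 * Vbar y₂))
  have hF0 (y : ℝ) : 0 ≤ F y := setIntegral_nonneg measurableSet_Ioi fun _ _ => (exp_pos _).le
  have hprod (y : ℝ) (hy : K ≤ y) :
      |exp (2 * Vbar y) * F y| ≤ 1 / (2 * p₂ - 1) * y ^ (2 * (p₁ - p₂) + 1) := by
    rw [abs_of_nonneg (mul_nonneg (exp_pos _).le (hF0 y))]
    calc exp (2 * Vbar y) * F y ≤ y ^ (2 * p₁) * (y ^ (1 - 2 * p₂) / (2 * p₂ - 1)) :=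
          mul_le_mul (hub y hy) (hFle y hy) (hF0 y) (rpow_nonneg (hK0.le.trans hy) _)
      _ = 1 / (2 * p₂ - 1) * y ^ (2 * (p₁ - p₂) + 1) := by
          rw [mul_div_assoc', ← rpow_add (hK0.trans_le hy)]
          ring_nf
  have hFmeas : AEMeasurable F (volume.restrict (Ioc K ξ)) :=
    (aemeasurable_restrict_of_antitoneOn measurableSet_Ici
      (antitoneOn_setIntegral_Ioi (fun y => (exp_pos _).le) (htail K le_rfl))).mono_measure
      (Measure.restrict_mono (Ioc_subset_Icc_self.trans Icc_subset_Ici_self) le_rfl)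
  have hII : IntervalIntegrable (fun y => exp (2 * Vbar y) * F y) volume K ξ :=
    intervalIntegrable_of_abs_le_const_mul_rpow hξ (by linarith)
      ((hmeas.const_mul 2).exp.aemeasurable.mul hFmeas).aestronglyMeasurable
      fun y hy => hprod y hy.1.le
  refine ⟨htail, hII, ?_⟩
  calc 2 * ∫ y in K..ξ, exp (2 * Vbar y) * F y
      ≤ 2 * (1 / (2 * p₂ - 1) *
          (ξ ^ (2 * (p₁ - p₂) + 1 + 1) / (2 * (p₁ - p₂) + 1 + 1))) := by
        gcongr
        exact intervalIntegral_le_of_le_const_mul_rpow hK0 hξ (by linarith)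
          (by positivity) hII fun y hy => (le_abs_self _).trans (hprod y hy.1)
    _ = 1 / ((2 * p₂ - 1) * (p₁ - p₂ + 1)) * ξ ^ (2 * (p₁ - p₂) + 2) := by
        have h2p : 2 * p₂ - 1 ≠ 0 := by linarith
        have hpp : p₁ - p₂ + 1 ≠ 0 := by linarith
        rw [add_assoc, one_add_one_eq_two]
        field_simp

/-- Under `y^(2p₂) ≤ exp(2·V̄(y)) ≤ y^(2p₁)` for `y ≥ K` (with
`K ≥ 1`, `1/2 < p₂ ≤ p₁`, `V̄` measurable and locally bounded on `(0,∞)`),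
for every `ξ ≥ K` the quantity
`v¹(ξ) = 2·∫_K^ξ e^{2V̄(y₁)} (∫_{y₁}^∞ e^{−2V̄(y₂)} dy₂) dy₁`
is finite (all integrals involved converge) and satisfies
`v¹(ξ) ≤ C·ξ^(2(p₁−p₂)+2)` with `C = 1/((2p₂−1)(p₁−p₂+1))`. -/
theorem first_moment_bound
    (K p₁ p₂ : ℝ) (hK : 1 ≤ K) (hp₂ : 1 / 2 < p₂) (hp : p₂ ≤ p₁)
    (Vbar : ℝ → ℝ) (hmeas : Measurable Vbar)
    (hloc : ∀ a b : ℝ, 0 < a → ∃ M : ℝ, ∀ y ∈ Set.Icc a b, |Vbar y| ≤ M)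
    (hlb : ∀ y : ℝ, K ≤ y → y ^ (2 * p₂) ≤ Real.exp (2 * Vbar y))
    (hub : ∀ y : ℝ, K ≤ y → Real.exp (2 * Vbar y) ≤ y ^ (2 * p₁))
    (ξ : ℝ) (hξ : K ≤ ξ) :
    (∀ y₁ : ℝ, K ≤ y₁ →
        IntegrableOn (fun y₂ => Real.exp (-(2 * Vbar y₂))) (Set.Ioi y₁)) ∧
      IntervalIntegrable
        (fun y₁ => Real.exp (2 * Vbar y₁) *
          ∫ y₂ in Set.Ioi y₁, Real.exp (-(2 * Vbar y₂))) volume K ξ ∧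
      2 * ∫ y₁ in K..ξ, Real.exp (2 * Vbar y₁) *
          ∫ y₂ in Set.Ioi y₁, Real.exp (-(2 * Vbar y₂)) ≤
        (1 / ((2 * p₂ - 1) * (p₁ - p₂ + 1))) * ξ ^ (2 * (p₁ - p₂) + 2) :=
  first_moment_bound_general K p₁ p₂ hK hp₂ hp Vbar hmeas hlb hub ξ hξ
end

section
/- Let K ≥ 1 and 1/2 < p₂ ≤ p₁ be real numbers with p₁ < (3/2)·p₂ − 5/4, and let V̄ : (0,∞) → ℝ be a measurable locally bounded function such that y^(2p₂) ≤ exp(2·V̄(y)) ≤ y^(2p₁) for all y ≥ K. Suppose v² : [K,∞) → [0,∞) is measurable and satisfies v²(y) ≤ C₂·y^(4(p₁−p₂+1)) for all y ≥ K with some constant C₂ > 0. Then for every ξ ≥ K, v³(ξ) := 6·∫_K^ξ exp(2·V̄(y₁)) · ( ∫_{y₁}^∞ v²(y₂)·exp(−2·V̄(y₂)) dy₂ ) dy₁ is finite and there exists a constant C₃ (depending only on p₁, p₂, C₂) such that v³(ξ) ≤ C₃·ξ^(6(p₁−p₂+1)). -/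
open MeasureTheory Set Real

/-! The integrand of the inner integral is bounded by `C₂ y^(-γ-1)` with
`γ = 6p₂ - 4p₁ - 5 > 0`, so its tail from `y₁` is `O(y₁^(-γ))`; after multiplication by
`exp (2 V̄ y₁) ≤ y₁^(2p₁)` the outer integrand is `O(y₁^(6(p₁-p₂+1)-1))`, whose integral
over `[K, ξ]` is `O(ξ^(6(p₁-p₂+1)))`. -/

theorem measurable_setIntegral_Ioi {f : ℝ → ℝ} (hf : Measurable f) :
    Measurable fun a => ∫ x in Ioi a, f x := by
  have hF : StronglyMeasurable fun p : ℝ × ℝ => (Ioi p.1).indicator f p.2 :=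
    (Measurable.ite (measurableSet_lt measurable_fst measurable_snd)
      (hf.comp measurable_snd) measurable_const).stronglyMeasurable
  simpa only [integral_indicator measurableSet_Ioi] using
    (hF.integral_prod_right' (ν := volume)).measurable

section RpowBounds

variable {f : ℝ → ℝ} {a b c γ : ℝ}

theorem integrableOn_Ioi_of_le_rpow (ha : 0 < a) (hγ : 0 < γ) (hf : Measurable f)
    (hf0 : ∀ x ∈ Ioi a, 0 ≤ f x) (hfle : ∀ x ∈ Ioi a, f x ≤ c * x ^ (-γ - 1)) :
    IntegrableOn f (Ioi a) := by
  refine ((integrableOn_Ioi_rpow_of_lt (a := -γ - 1) (by linarith) ha).const_mul c).mono'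
    hf.aestronglyMeasurable ?_
  filter_upwards [ae_restrict_mem measurableSet_Ioi] with x hx
  rw [Real.norm_of_nonneg (hf0 x hx)]
  exact hfle x hx

theorem setIntegral_Ioi_le_rpow (ha : 0 < a) (hγ : 0 < γ) (hf : Measurable f)
    (hf0 : ∀ x ∈ Ioi a, 0 ≤ f x) (hfle : ∀ x ∈ Ioi a, f x ≤ c * x ^ (-γ - 1)) :
    ∫ x in Ioi a, f x ≤ c / γ * a ^ (-γ) := by
  have hα : -γ - 1 < -1 := by linarith
  calc ∫ x in Ioi a, f x ≤ ∫ x in Ioi a, c * x ^ (-γ - 1) :=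
        setIntegral_mono_on (integrableOn_Ioi_of_le_rpow ha hγ hf hf0 hfle)
          ((integrableOn_Ioi_rpow_of_lt hα ha).const_mul c) measurableSet_Ioi hfle
    _ = c / γ * a ^ (-γ) := by
        rw [integral_const_mul, integral_Ioi_rpow_of_lt hα ha, sub_add_cancel]
        field_simp

theorem intervalIntegrable_of_le_rpow (hab : a ≤ b) (hγ : 0 < γ)
    (hf : Measurable f) (hf0 : ∀ x ∈ Icc a b, 0 ≤ f x)
    (hfle : ∀ x ∈ Icc a b, f x ≤ c * x ^ (γ - 1)) :
    IntervalIntegrable f volume a b := by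
  refine ((intervalIntegral.intervalIntegrable_rpow' (r := γ - 1) (by linarith)).const_mul c).mono_fun'
    hf.aestronglyMeasurable ?_
  rw [uIoc_of_le hab]
  filter_upwards [ae_restrict_mem measurableSet_Ioc] with x hx
  rw [Real.norm_of_nonneg (hf0 x (Ioc_subset_Icc_self hx))]
  exact hfle x (Ioc_subset_Icc_self hx)

theorem intervalIntegral_le_rpow (ha : 0 < a) (hab : a ≤ b) (hγ : 0 < γ) (hc : 0 ≤ c)
    (hf : Measurable f) (hf0 : ∀ x ∈ Icc a b, 0 ≤ f x)
    (hfle : ∀ x ∈ Icc a b, f x ≤ c * x ^ (γ - 1)) :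
    ∫ x in a..b, f x ≤ c / γ * b ^ γ := by
  have hβ : -1 < γ - 1 := by linarith
  calc ∫ x in a..b, f x ≤ ∫ x in a..b, c * x ^ (γ - 1) :=
        intervalIntegral.integral_mono_on hab (intervalIntegrable_of_le_rpow hab hγ hf hf0 hfle)
          ((intervalIntegral.intervalIntegrable_rpow' hβ).const_mul c) hfle
    _ = c / γ * (b ^ γ - a ^ γ) := by
        rw [intervalIntegral.integral_const_mul, integral_rpow (Or.inl hβ), sub_add_cancel]
        ring
    _ ≤ c / γ * b ^ γ := by
        gcongr
        exact sub_le_self _ (rpow_nonneg ha.le γ)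

end RpowBounds

theorem mul_exp_neg_le_rpow_sub {x u w C s q : ℝ} (hx : 0 < x) (hC : 0 ≤ C)
    (hu : u ≤ C * x ^ s) (hw : x ^ q ≤ exp w) : u * exp (-w) ≤ C * x ^ (s - q) := by
  calc u * exp (-w) ≤ C * x ^ s * (x ^ q)⁻¹ := by
        rw [exp_neg]
        gcongr
    _ = C * x ^ (s - q) := by rw [rpow_sub hx]; ring

theorem exp_mul_le_rpow_add {x u w C s q : ℝ} (hx : 0 < x) (hu0 : 0 ≤ u)
    (hu : u ≤ C * x ^ s) (hw : exp w ≤ x ^ q) : exp w * u ≤ C * x ^ (q + s) := by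
  calc exp w * u ≤ x ^ q * (C * x ^ s) := by gcongr
    _ = C * x ^ (q + s) := by rw [rpow_add hx]; ring
theorem third_moment_bound_general
    (K p₁ p₂ : ℝ) (hK : 1 ≤ K) (hp : p₂ ≤ p₁)
    (hp' : p₁ < (3 / 2) * p₂ - 5 / 4)
    (Vbar : ℝ → ℝ) (hmeas : Measurable Vbar)
    (hlb : ∀ y : ℝ, K ≤ y → y ^ (2 * p₂) ≤ Real.exp (2 * Vbar y))
    (hub : ∀ y : ℝ, K ≤ y → Real.exp (2 * Vbar y) ≤ y ^ (2 * p₁))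
    (v₂ : ℝ → ℝ) (hv₂meas : Measurable v₂)
    (hv₂nonneg : ∀ y : ℝ, K ≤ y → 0 ≤ v₂ y)
    (C₂ : ℝ) (hC₂ : 0 < C₂)
    (hv₂ : ∀ y : ℝ, K ≤ y → v₂ y ≤ C₂ * y ^ (4 * (p₁ - p₂ + 1))) :
    (∀ ξ : ℝ, K ≤ ξ →
      (∀ y₁ : ℝ, K ≤ y₁ →
          IntegrableOn (fun y₂ => v₂ y₂ * Real.exp (-(2 * Vbar y₂)))
            (Set.Ioi y₁)) ∧
        IntervalIntegrable
          (fun y₁ => Real.exp (2 * Vbar y₁) *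
            ∫ y₂ in Set.Ioi y₁, v₂ y₂ * Real.exp (-(2 * Vbar y₂)))
          volume K ξ) ∧
      ∃ C₃ : ℝ, ∀ ξ : ℝ, K ≤ ξ →
        6 * ∫ y₁ in K..ξ, Real.exp (2 * Vbar y₁) *
            ∫ y₂ in Set.Ioi y₁, v₂ y₂ * Real.exp (-(2 * Vbar y₂)) ≤
          C₃ * ξ ^ (6 * (p₁ - p₂ + 1)) := by
  set γ := 6 * p₂ - 4 * p₁ - 5
  set δ := 6 * (p₁ - p₂ + 1)
  have hγ : 0 < γ := by linarith
  have hδ : 0 < δ := by linarith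
  set f := fun y₂ => v₂ y₂ * exp (-(2 * Vbar y₂))
  set h := fun y₁ => exp (2 * Vbar y₁) * ∫ y₂ in Ioi y₁, f y₂
  have hpos {y : ℝ} (hy : K ≤ y) : 0 < y := by linarith
  have hf : Measurable f := hv₂meas.mul (measurable_const.mul hmeas).neg.exp
  have hf0 (y₁ : ℝ) (hy₁ : K ≤ y₁) : ∀ y ∈ Ioi y₁, 0 ≤ f y := fun y hy =>
    mul_nonneg (hv₂nonneg y (hy₁.trans hy.le)) (exp_pos _).le
  have hfle (y₁ : ℝ) (hy₁ : K ≤ y₁) : ∀ y ∈ Ioi y₁, f y ≤ C₂ * y ^ (-γ - 1) := fun y hy => by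
    have hKy := hy₁.trans hy.le
    convert mul_exp_neg_le_rpow_sub (hpos hKy) hC₂.le (hv₂ y hKy) (hlb y hKy) using 3
    ring
  have hh : Measurable h :=
    (measurable_const.mul hmeas).exp.mul (measurable_setIntegral_Ioi hf)
  have hg0 (y : ℝ) (hy : K ≤ y) : 0 ≤ ∫ y₂ in Ioi y, f y₂ :=
    setIntegral_nonneg measurableSet_Ioi (hf0 y hy)
  have hh0 (y : ℝ) (hy : K ≤ y) : 0 ≤ h y := mul_nonneg (exp_pos _).le (hg0 y hy)
  have hhle (y : ℝ) (hy : K ≤ y) : h y ≤ C₂ / γ * y ^ (δ - 1) := by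
    convert exp_mul_le_rpow_add (hpos hy) (hg0 y hy)
      (setIntegral_Ioi_le_rpow (hpos hy) hγ hf (hf0 y hy) (hfle y hy)) (hub y hy) using 3
    simp only [γ, δ]
    ring
  refine ⟨fun ξ hξ => ⟨fun y₁ hy₁ => integrableOn_Ioi_of_le_rpow (hpos hy₁) hγ hf
      (hf0 y₁ hy₁) (hfle y₁ hy₁), intervalIntegrable_of_le_rpow hξ hδ hh
      (fun y hy => hh0 y hy.1) (fun y hy => hhle y hy.1)⟩, 6 * (C₂ / γ / δ), fun ξ hξ => ?_⟩
  have hI := intervalIntegral_le_rpow (hpos le_rfl) hξ hδ (by positivity) hh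
    (fun y hy => hh0 y hy.1) (fun y hy => hhle y hy.1)
  linarith

/-- Under `y^(2p₂) ≤ exp(2·V̄(y)) ≤ y^(2p₁)` for `y ≥ K` (with
`K ≥ 1`, `1/2 < p₂ ≤ p₁`, `p₁ < (3/2)p₂ − 5/4`), if `v² ≥ 0` is measurable
with `v²(y) ≤ C₂·y^(4(p₁−p₂+1))` for `y ≥ K`, then for every `ξ ≥ K`
`v³(ξ) = 6·∫_K^ξ e^{2V̄(y₁)} (∫_{y₁}^∞ v²(y₂) e^{−2V̄(y₂)} dy₂) dy₁`
is finite (all integrals involved converge), and there is a constant `C₃`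
(depending only on `p₁, p₂, C₂`) with `v³(ξ) ≤ C₃·ξ^(6(p₁−p₂+1))`. -/
theorem third_moment_bound
    (K p₁ p₂ : ℝ) (hK : 1 ≤ K) (hp₂ : 1 / 2 < p₂) (hp : p₂ ≤ p₁)
    (hp' : p₁ < (3 / 2) * p₂ - 5 / 4)
    (Vbar : ℝ → ℝ) (hmeas : Measurable Vbar)
    (hloc : ∀ a b : ℝ, 0 < a → ∃ M : ℝ, ∀ y ∈ Set.Icc a b, |Vbar y| ≤ M)
    (hlb : ∀ y : ℝ, K ≤ y → y ^ (2 * p₂) ≤ Real.exp (2 * Vbar y))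
    (hub : ∀ y : ℝ, K ≤ y → Real.exp (2 * Vbar y) ≤ y ^ (2 * p₁))
    (v₂ : ℝ → ℝ) (hv₂meas : Measurable v₂)
    (hv₂nonneg : ∀ y : ℝ, K ≤ y → 0 ≤ v₂ y)
    (C₂ : ℝ) (hC₂ : 0 < C₂)
    (hv₂ : ∀ y : ℝ, K ≤ y → v₂ y ≤ C₂ * y ^ (4 * (p₁ - p₂ + 1))) :
    (∀ ξ : ℝ, K ≤ ξ →
      (∀ y₁ : ℝ, K ≤ y₁ →
          IntegrableOn (fun y₂ => v₂ y₂ * Real.exp (-(2 * Vbar y₂)))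
            (Set.Ioi y₁)) ∧
        IntervalIntegrable
          (fun y₁ => Real.exp (2 * Vbar y₁) *
            ∫ y₂ in Set.Ioi y₁, v₂ y₂ * Real.exp (-(2 * Vbar y₂)))
          volume K ξ) ∧
      ∃ C₃ : ℝ, ∀ ξ : ℝ, K ≤ ξ →
        6 * ∫ y₁ in K..ξ, Real.exp (2 * Vbar y₁) *
            ∫ y₂ in Set.Ioi y₁, v₂ y₂ * Real.exp (-(2 * Vbar y₂)) ≤
          C₃ * ξ ^ (6 * (p₁ - p₂ + 1)) :=
  third_moment_bound_general K p₁ p₂ hK hp hp' Vbar hmeas hlb hub v₂ hv₂meas hv₂nonneg C₂ hC₂ hv₂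
end
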